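/- arXiv:2312.07117 — 2 statements merged into one kernel-verified Lean document; each statement's English description precedes it below -/
import Mathlib

section
/- In a temporally connected proper temporal graph whose underlying graph is a cycle and which admits no journey covering all vertices, a clockwise journey J is dominating (no other clockwise journey covers all of J's vertices) if and only if: (1) J starts at the earliest possible time on its two initial edges, (2) J ends at the latest possible time on its two final edges, and (3) no time edge lies strictly between any two successive time edges used by J. -/
open Finset

abbrev TLabel (n : ℕ) := Sym2 (Fin n) → Finset ℕ

namespace Temporal

variable {n : ℕ}

/-- Journeys: from `u` one can reach `v` arriving exactly at time `t`. -/
inductive JTo (L : TLabel n) (u : Fin n) : Fin n → ℕ → Prop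
  | single (v : Fin n) (t : ℕ) : t ∈ L s(u, v) → JTo L u v t
  | step (v w : Fin n) (t t' : ℕ) : JTo L u v t → t' ∈ L s(v, w) → t < t' → JTo L u w t'

/-- Temporal reachability. -/
def Reach (L : TLabel n) (u v : Fin n) : Prop := u = v ∨ ∃ t, JTo L u v t

/-- Temporal connectivity. -/
def TC (L : TLabel n) : Prop := ∀ u v, Reach L u v

def NoLoops (L : TLabel n) : Prop := ∀ v : Fin n, L s(v, v) = ∅

/-- Proper labelling: incident distinct edges share no label. -/
def Proper (L : TLabel n) : Prop :=
  ∀ e f : Sym2 (Fin n), e ≠ f → (∃ v, v ∈ e ∧ v ∈ f) → Disjoint (L e) (L f)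

/-- Remove a single label `t` from edge `e`. -/
def erase (L : TLabel n) (e : Sym2 (Fin n)) (t : ℕ) : TLabel n :=
  fun f => if f = e then (L f).erase t else L f

/-- A label is necessary if removing it strictly reduces reachability. -/
def Necessary (L : TLabel n) (e : Sym2 (Fin n)) (t : ℕ) : Prop :=
  ∃ u v, Reach L u v ∧ ¬ Reach (erase L e t) u v

/-- A minimal labelling: all labels are necessary. -/
def Minimal (L : TLabel n) : Prop := ∀ e t, t ∈ L e → Necessary L e t

/-- Total number of labels (temporal cost). -/
def cost (L : TLabel n) : ℕ := ∑ e : Sym2 (Fin n), (L e).card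

/-- The labelling only uses edges of `G`. -/
def SupportedOn (L : TLabel n) (G : SimpleGraph (Fin n)) : Prop :=
  ∀ e, L e ≠ ∅ → e ∈ G.edgeSet

/-- A journey given explicitly by its list of steps `(u, v, t)`. -/
abbrev Steps (n : ℕ) := List (Fin n × Fin n × ℕ)

/-- The list of steps forms a journey: nonempty, each step uses an existing label,
consecutive steps are incident and have strictly increasing labels. -/
def IsJourneySteps (L : TLabel n) (l : Steps n) : Prop :=
  l ≠ [] ∧ (∀ p ∈ l, p.2.2 ∈ L s(p.1, p.2.1)) ∧
    l.Chain' (fun p q => p.2.1 = q.1 ∧ p.2.2 < q.2.2)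

/-- A clockwise journey on the cycle: every step goes from `i` to `i + 1`. -/
def Clockwise [NeZero n] (l : Steps n) : Prop := ∀ p ∈ l, p.2.1 = p.1 + 1

/-- A counter-clockwise journey on the cycle: every step goes from `i` to `i - 1`. -/
def CounterClockwise [NeZero n] (l : Steps n) : Prop := ∀ p ∈ l, p.2.1 = p.1 - 1

/-- The vertices visited by a journey. -/
def verts (l : Steps n) : Set (Fin n) := {v | ∃ p ∈ l, v = p.1 ∨ v = p.2.1}

/-- A journey covers a vertex set if every vertex of the set is visited. -/
def Covers (l : Steps n) (S : Set (Fin n)) : Prop := S ⊆ verts l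

/-- A dominating clockwise journey: no other clockwise journey covers its vertex set
(or more). -/
def DominatingCW [NeZero n] (L : TLabel n) (l : Steps n) : Prop :=
  IsJourneySteps L l ∧ Clockwise l ∧
    ∀ l', IsJourneySteps L l' → Clockwise l' → l' ≠ l → ¬ Covers l' (verts l)

/-- A dominating counter-clockwise journey. -/
def DominatingCCW [NeZero n] (L : TLabel n) (l : Steps n) : Prop :=
  IsJourneySteps L l ∧ CounterClockwise l ∧
    ∀ l', IsJourneySteps L l' → CounterClockwise l' → l' ≠ l → ¬ Covers l' (verts l)

section Helpers

variable [NeZero n] {L : TLabel n} {l : Steps n}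

open Fin.NatCast Fin.CommRing

lemma chain'_iff_get_aux {α : Type*} {R : α → α → Prop} {l : List α} :
    l.Chain' R ↔ ∀ (i : ℕ) (h : i < l.length - 1),
      R (l.get ⟨i, by omega⟩) (l.get ⟨i + 1, by omega⟩) := by
  show List.IsChain R l ↔ _
  rw [List.isChain_iff_getElem]
  constructor <;> intro h i hi <;> exact h i (by omega)

lemma mem_of_journey (h : IsJourneySteps L l) {i : ℕ} (hi : i < l.length) :
    (l.get ⟨i, hi⟩).2.2 ∈ L s((l.get ⟨i, hi⟩).1, (l.get ⟨i, hi⟩).2.1) :=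
  h.2.1 _ (l.get_mem _)

lemma chain_of_journey (h : IsJourneySteps L l) {i : ℕ} (hi : i + 1 < l.length) :
    (l.get ⟨i, by omega⟩).2.1 = (l.get ⟨i+1, hi⟩).1 ∧
    (l.get ⟨i, by omega⟩).2.2 < (l.get ⟨i+1, hi⟩).2.2 :=
  (chain'_iff_get_aux.mp h.2.2) i (by omega)

lemma cw_get (hCW : Clockwise l) {i : ℕ} (hi : i < l.length) :
    (l.get ⟨i, hi⟩).2.1 = (l.get ⟨i, hi⟩).1 + 1 := hCW _ (l.get_mem _)

lemma fst_get (h : IsJourneySteps L l) (hCW : Clockwise l) {i : ℕ} (hi : i < l.length) :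
    (l.get ⟨i, hi⟩).1 = (l.get ⟨0, by omega⟩).1 + (i : Fin n) := by
  induction i with
  | zero => simp
  | succ k ih =>
    have hk : k + 1 < l.length := hi
    have h1 := (chain_of_journey h hk).1
    rw [← h1, cw_get hCW (by omega), ih (by omega)]
    push_cast
    ring

lemma time_mono (h : IsJourneySteps L l) {i j : ℕ} (hij : i < j) (hj : j < l.length) :
    (l.get ⟨i, by omega⟩).2.2 < (l.get ⟨j, hj⟩).2.2 := by
  induction j with
  | zero => omega
  | succ k ih =>
    rcases Nat.lt_succ_iff_lt_or_eq.mp hij with h' | h'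
    · exact lt_trans (ih h' (by omega)) (chain_of_journey h hj).2
    · subst h'
      exact (chain_of_journey h hj).2

lemma fin_cast_inj {i j : ℕ} (hi : i < n) (hj : j < n) (h : (i : Fin n) = (j : Fin n)) :
    i = j := by
  have := congrArg Fin.val h
  rwa [Fin.val_natCast, Fin.val_natCast, Nat.mod_eq_of_lt hi, Nat.mod_eq_of_lt hj] at this

lemma mem_verts_iff (h : IsJourneySteps L l) (hCW : Clockwise l) (h0 : 0 < l.length)
    (v : Fin n) :
    v ∈ verts l ↔ ∃ i ≤ l.length, v = (l.get ⟨0, h0⟩).1 + (i : Fin n) := by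
  constructor
  · rintro ⟨p, hp, hv⟩
    obtain ⟨⟨i, hi⟩, rfl⟩ := List.mem_iff_get.mp hp
    rcases hv with rfl | rfl
    · exact ⟨i, by omega, fst_get h hCW hi⟩
    · refine ⟨i + 1, by omega, ?_⟩
      rw [cw_get hCW hi, fst_get h hCW hi]
      push_cast
      ring
  · rintro ⟨i, hi, rfl⟩
    rcases Nat.lt_or_ge i l.length with hi' | hi'
    · exact ⟨l.get ⟨i, hi'⟩, l.get_mem _, Or.inl (fst_get h hCW hi').symm⟩
    · have hieq : i = l.length := by omega
      refine ⟨l.get ⟨l.length - 1, by omega⟩, l.get_mem _, Or.inr ?_⟩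
      have e1 : (l.get ⟨l.length - 1, by omega⟩).2.1
          = (l.get ⟨0, h0⟩).1 + ((l.length : ℕ) : Fin n) := by
        rw [cw_get hCW (by omega), fst_get h hCW (by omega)]
        have h2 : ((l.length - 1 : ℕ) : Fin n) + 1 = ((l.length : ℕ) : Fin n) := by
          conv_rhs => rw [show l.length = l.length - 1 + 1 by omega]
          push_cast
          ring
        rw [add_assoc, h2]
      rw [e1, hieq]

lemma length_lt (hnc : ¬ ∃ l : Steps n, IsJourneySteps L l ∧ Covers l Set.univ)
    (h : IsJourneySteps L l) (hCW : Clockwise l) : l.length + 1 < n := by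
  have h0 : 0 < l.length := List.length_pos_iff.mpr h.1
  by_contra hle
  push_neg at hle
  apply hnc
  refine ⟨l, h, fun v _ => ?_⟩
  rw [mem_verts_iff h hCW h0]
  refine ⟨(v - (l.get ⟨0, h0⟩).1).val, ?_, ?_⟩
  · have := (v - (l.get ⟨0, h0⟩).1).isLt
    omega
  · rw [Fin.cast_val_eq_self, add_comm, sub_add_cancel]

end Helpers

section Constructions

variable [NeZero n] {L : TLabel n} {l : Steps n}

set_option linter.unusedSectionVars false

lemma verts_subset_of_sub (h : ∀ p ∈ l, p ∈ l') : verts l ⊆ verts l' := by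
  rintro v ⟨p, hp, hv⟩
  exact ⟨p, h p hp, hv⟩

lemma not_dom_of_retime (h : IsJourneySteps L l) (hCW : Clockwise l)
    {i : ℕ} (hi : i < l.length) {t : ℕ}
    (hmem : t ∈ L s((l.get ⟨i, hi⟩).1, (l.get ⟨i, hi⟩).1 + 1))
    (hne : t ≠ (l.get ⟨i, hi⟩).2.2)
    (hlo : ∀ _ : 0 < i, (l.get ⟨i - 1, by omega⟩).2.2 < t)
    (hhi : ∀ h' : i + 1 < l.length, t < (l.get ⟨i + 1, h'⟩).2.2) :
    ¬ DominatingCW L l := by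
  intro hdom
  set x : Fin n × Fin n × ℕ := ((l.get ⟨i, hi⟩).1, (l.get ⟨i, hi⟩).1 + 1, t) with hx
  have hlen : (l.set i x).length = l.length := l.length_set ..
  have hget : ∀ j (hj : j < l.length),
      (l.set i x).get ⟨j, by omega⟩ = if i = j then x else l.get ⟨j, hj⟩ := by
    intro j hj
    simp [List.get_eq_getElem, List.getElem_set]
  have hgeti : (l.set i x).get ⟨i, by omega⟩ = x := by rw [hget i hi]; simp
  have hcw' : Clockwise (l.set i x) := by
    intro p hp
    rcases List.mem_or_eq_of_mem_set hp with hp' | rfl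
    · exact hCW p hp'
    · rfl
  have hfst : ∀ j (hj : j < l.length), ((l.set i x).get ⟨j, by omega⟩).1 = (l.get ⟨j, hj⟩).1 := by
    intro j hj
    rw [hget j hj]
    split
    · next hij => subst hij; rfl
    · rfl
  have hsnd : ∀ j (hj : j < l.length),
      ((l.set i x).get ⟨j, by omega⟩).2.1 = (l.get ⟨j, hj⟩).2.1 := by
    intro j hj
    rw [hget j hj]
    split
    · next hij => subst hij; exact (cw_get hCW hj).symm
    · rfl
  have hj' : IsJourneySteps L (l.set i x) := by
    refine ⟨by simp [← List.length_pos_iff, hlen, List.length_pos_iff.mpr h.1], ?_, ?_⟩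
    · intro p hp
      rcases List.mem_or_eq_of_mem_set hp with hp' | rfl
      · exact h.2.1 p hp'
      · exact hmem
    · rw [chain'_iff_get_aux]
      intro j hj
      have hj1 : j + 1 < l.length := by omega
      have hj0 : j < l.length := by omega
      constructor
      · rw [hsnd j hj0, hfst (j+1) hj1]
        exact (chain_of_journey h hj1).1
      · rw [hget j hj0, hget (j+1) hj1]
        rcases Nat.lt_trichotomy i j with h1 | rfl | h1
        · have : ¬ (i = j) := by omega
          have h2 : ¬ (i = j + 1) := by omega
          simp only [this, h2, if_false]
          exact (chain_of_journey h hj1).2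
        · rw [if_pos rfl, if_neg (by omega)]
          exact hhi hj1
        · rcases Nat.eq_or_lt_of_le (Nat.succ_le_of_lt h1) with h2 | h2
          · simp only [show ¬ (i = j) by omega, if_false, h2.symm, if_pos rfl]
            have := hlo (by omega)
            simpa [← h2] using this
          · simp only [show ¬ (i = j) by omega, show ¬ (i = j + 1) by omega, if_false]
            exact (chain_of_journey h hj1).2
  have hne' : l.set i x ≠ l := by
    intro heq
    apply hne
    have h2 : l.get ⟨i, hi⟩ = x := by
      rw [← List.get_of_eq heq ⟨i, by omega⟩]
      exact hgeti
    exact (congrArg (fun p => p.2.2) h2).symm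
  apply hdom.2.2 (l.set i x) hj' hcw' hne'
  intro v hv
  have h0 : 0 < l.length := List.length_pos_iff.mpr h.1
  rw [mem_verts_iff h hCW h0] at hv
  rw [mem_verts_iff hj' hcw' (by omega)]
  obtain ⟨k, hk, rfl⟩ := hv
  exact ⟨k, by omega, by rw [hfst 0 h0]⟩

lemma not_dom_of_prepend (h : IsJourneySteps L l) (hCW : Clockwise l)
    (h0 : 0 < l.length) {t : ℕ}
    (hmem : t ∈ L s((l.get ⟨0, h0⟩).1 - 1, (l.get ⟨0, h0⟩).1))
    (hlt : t < (l.get ⟨0, h0⟩).2.2) : ¬ DominatingCW L l := by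
  intro hdom
  set a := (l.get ⟨0, h0⟩).1 with ha
  set x : Fin n × Fin n × ℕ := (a - 1, a, t) with hx
  have hsub : a - 1 + 1 = a := sub_add_cancel a 1
  have hj' : IsJourneySteps L (x :: l) := by
    refine ⟨List.cons_ne_nil _ _, ?_, ?_⟩
    · intro p hp
      rcases List.mem_cons.mp hp with rfl | hp'
      · exact hmem
      · exact h.2.1 p hp'
    · unfold List.Chain'; rw [List.isChain_cons]
      refine ⟨?_, h.2.2⟩
      intro y hy
      have hh : l.head? = some (l.get ⟨0, h0⟩) := by
        rw [List.get_eq_getElem, ← List.getElem?_eq_getElem, List.head?_eq_getElem?]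
      rw [hh] at hy
      rw [Option.mem_def, Option.some_inj] at hy
      subst hy
      exact ⟨rfl, hlt⟩
  have hcw' : Clockwise (x :: l) := by
    intro p hp
    rcases List.mem_cons.mp hp with rfl | hp'
    · exact hsub.symm
    · exact hCW p hp'
  have hne' : x :: l ≠ l := by
    intro heq
    have := congrArg List.length heq
    simp at this
  apply hdom.2.2 (x :: l) hj' hcw' hne'
  exact verts_subset_of_sub (fun p hp => List.mem_cons_of_mem _ hp)

lemma not_dom_of_append (h : IsJourneySteps L l) (hCW : Clockwise l)
    (h0 : 0 < l.length) {t : ℕ}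
    (hmem : t ∈ L s((l.get ⟨l.length - 1, by omega⟩).2.1,
      (l.get ⟨l.length - 1, by omega⟩).2.1 + 1))
    (hgt : (l.get ⟨l.length - 1, by omega⟩).2.2 < t) : ¬ DominatingCW L l := by
  intro hdom
  have hl1 : l.length - 1 < l.length := by omega
  set c := (l.get ⟨l.length - 1, hl1⟩).2.1 with hc
  set x : Fin n × Fin n × ℕ := (c, c + 1, t) with hx
  have hlast : l.getLast? = some (l.get ⟨l.length - 1, hl1⟩) := by
    rw [List.getLast?_eq_getLast h.1, List.getLast_eq_getElem, List.get_eq_getElem]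
  have hj' : IsJourneySteps L (l ++ [x]) := by
    refine ⟨by simp, ?_, ?_⟩
    · intro p hp
      rcases List.mem_append.mp hp with hp' | hp'
      · exact h.2.1 p hp'
      · rw [List.mem_singleton.mp hp']
        exact hmem
    · unfold List.Chain'; rw [List.isChain_append]
      refine ⟨h.2.2, List.isChain_singleton _, ?_⟩
      intro y hy z hz
      rw [hlast] at hy
      simp only [Option.mem_def, Option.some_inj] at hy
      simp only [List.head?_cons, Option.mem_def, Option.some_inj] at hz
      subst hy; subst hz
      exact ⟨hc, hgt⟩
  have hcw' : Clockwise (l ++ [x]) := by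
    intro p hp
    rcases List.mem_append.mp hp with hp' | hp'
    · exact hCW p hp'
    · rw [List.mem_singleton.mp hp']
  have hne' : l ++ [x] ≠ l := by
    intro heq
    have := congrArg List.length heq
    simp at this
  apply hdom.2.2 (l ++ [x]) hj' hcw' hne'
  exact verts_subset_of_sub (fun p hp => List.mem_append_left _ hp)

end Constructions

section Main

variable [NeZero n] {L : TLabel n}

open Fin.NatCast Fin.CommRing

set_option maxHeartbeats 2000000 in
theorem stmt15_aux (hnc : ¬ ∃ l : Steps n, IsJourneySteps L l ∧ Covers l Set.univ)
    (J : Steps n) (hJ : IsJourneySteps L J) (hCW : Clockwise J) :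
    DominatingCW L J ↔
      ((∀ p, J.head? = some p → ∀ t < p.2.2,
          t ∉ L s(p.1, p.1 + 1) ∧ t ∉ L s(p.1 - 1, p.1)) ∧
       (∀ p, J.getLast? = some p → ∀ t, p.2.2 < t →
          t ∉ L s(p.1, p.1 + 1) ∧ t ∉ L s(p.1 + 1, p.1 + 2)) ∧
       J.Chain' (fun p q => ∀ t, p.2.2 < t → t < q.2.2 →
          t ∉ L s(p.1, p.1 + 1) ∧ t ∉ L s(q.1, q.1 + 1))) := by
  have h0 : 0 < J.length := List.length_pos_iff.mpr hJ.1
  have hhead : J.head? = some (J.get ⟨0, h0⟩) := by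
    rw [List.get_eq_getElem, ← List.getElem?_eq_getElem, List.head?_eq_getElem?]
  have hlastq : J.getLast? = some (J.get ⟨J.length - 1, by omega⟩) := by
    rw [List.getLast?_eq_getLast hJ.1, List.getLast_eq_getElem, List.get_eq_getElem]
  constructor
  · intro hdom
    refine ⟨?_, ?_, ?_⟩
    · intro p hp t ht
      rw [hhead, Option.some_inj] at hp
      subst hp
      constructor
      · intro hm
        refine not_dom_of_retime hJ hCW h0 hm (ne_of_lt ht) ?_ ?_ hdom
        · intro h'
          exact absurd h' (lt_irrefl 0)
        · intro h'
          exact lt_trans ht (chain_of_journey hJ h').2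
      · intro hm
        exact not_dom_of_prepend hJ hCW h0 hm ht hdom
    · intro p hp t ht
      rw [hlastq, Option.some_inj] at hp
      subst hp
      constructor
      · intro hm
        refine not_dom_of_retime hJ hCW (i := J.length - 1) (by omega) hm
          (Ne.symm (ne_of_lt ht)) ?_ ?_ hdom
        · intro h'
          exact lt_trans (time_mono hJ (by omega) (by omega)) ht
        · intro h'
          omega
      · intro hm
        refine not_dom_of_append hJ hCW h0 ?_ ht hdom
        rw [cw_get hCW]
        have h2 : (J.get ⟨J.length - 1, by omega⟩).1 + 1 + 1
            = (J.get ⟨J.length - 1, by omega⟩).1 + 2 := by ring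
        rw [h2]
        exact hm
    · rw [chain'_iff_get_aux]
      intro i hi t ht1 ht2
      have hi1 : i + 1 < J.length := by omega
      constructor
      · intro hm
        refine not_dom_of_retime hJ hCW (i := i) (by omega) hm (ne_of_gt ht1) ?_ ?_ hdom
        · intro h'
          exact lt_trans (time_mono hJ (by omega) (by omega)) ht1
        · intro h'
          exact ht2
      · intro hm
        refine not_dom_of_retime hJ hCW (i := i + 1) hi1 hm (ne_of_lt ht2) ?_ ?_ hdom
        · intro h'
          exact ht1
        · intro h'
          exact lt_trans ht2 (time_mono hJ (by omega) h')
  · rintro ⟨H1, H2, H3⟩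
    refine ⟨hJ, hCW, ?_⟩
    intro l' hl' hcw' hne hcov
    have H1' := H1 _ hhead
    have H2' := H2 _ hlastq
    have H3' := chain'_iff_get_aux.mp H3
    have h0' : 0 < l'.length := List.length_pos_iff.mpr hl'.1
    have hm : J.length + 1 < n := length_lt hnc hJ hCW
    have hm' : l'.length + 1 < n := length_lt hnc hl' hcw'
    -- cover in index form
    have hcovA : ∀ i ≤ J.length, ∃ j ≤ l'.length,
        (J.get ⟨0, h0⟩).1 + (i : Fin n) = (l'.get ⟨0, h0'⟩).1 + (j : Fin n) := by
      intro i hi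
      have : (J.get ⟨0, h0⟩).1 + (i : Fin n) ∈ verts l' :=
        hcov ((mem_verts_iff hJ hCW h0 _).mpr ⟨i, hi, rfl⟩)
      obtain ⟨j, hj, hj'⟩ := (mem_verts_iff hl' hcw' h0' _).mp this
      exact ⟨j, hj, hj'⟩
    obtain ⟨j0, hj0le, hj0⟩ := hcovA 0 (Nat.zero_le _)
    rw [Nat.cast_zero, add_zero] at hj0
    -- arc containment: j0 + J.length ≤ l'.length
    have harc : j0 + J.length ≤ l'.length := by
      by_contra hlt
      push_neg at hlt
      obtain ⟨j1, hj1le, hj1⟩ := hcovA (l'.length + 1 - j0) (by omega)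
      rw [hj0, add_assoc, ← Nat.cast_add] at hj1
      have := fin_cast_inj (n := n) (by omega) (by omega)
        (add_left_cancel hj1)
      omega
    -- cast fact
    have hcast : ∀ i : ℕ, ((j0 + i : ℕ) : Fin n) = (j0 : Fin n) + (i : Fin n) := by
      intro i
      push_cast
      ring
    -- vertices of l' along J's range (generalized index)
    have hfstG : ∀ j i (hj : j < l'.length) (hi : i < J.length), j = j0 + i →
        (l'.get ⟨j, hj⟩).1 = (J.get ⟨i, hi⟩).1 := by
      rintro j i hj hi rfl
      rw [fst_get hl' hcw' hj, fst_get hJ hCW hi, hj0, hcast, add_assoc]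
    have hsndG : ∀ j i (hj : j < l'.length) (hi : i < J.length), j = j0 + i →
        (l'.get ⟨j, hj⟩).2.1 = (J.get ⟨i, hi⟩).1 + 1 := by
      intro j i hj hi he
      rw [cw_get hcw' hj, hfstG j i hj hi he]
    have hmemG : ∀ j i (hj : j < l'.length) (hi : i < J.length), j = j0 + i →
        (l'.get ⟨j, hj⟩).2.2 ∈ L s((J.get ⟨i, hi⟩).1, (J.get ⟨i, hi⟩).1 + 1) := by
      intro j i hj hi he
      have := mem_of_journey hl' hj
      rwa [hfstG j i hj hi he, hsndG j i hj hi he] at this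
    -- upward: t i ≤ s (j0+i)
    have hup : ∀ i (hi : i < J.length),
        (J.get ⟨i, hi⟩).2.2 ≤ (l'.get ⟨j0 + i, by omega⟩).2.2 := by
      intro i
      induction i with
      | zero =>
        intro hi
        by_contra hlt
        push_neg at hlt
        exact (H1' _ hlt).1 (hmemG (j0 + 0) 0 (by omega) hi rfl)
      | succ k ih =>
        intro hi
        have hk : k < J.length := by omega
        have hchain : (l'.get ⟨j0 + k, by omega⟩).2.2
            < (l'.get ⟨j0 + (k + 1), by omega⟩).2.2 :=
          time_mono hl' (show j0 + k < j0 + (k + 1) by omega) (by omega)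
        by_contra hlt
        push_neg at hlt
        have hgt : (J.get ⟨k, hk⟩).2.2 < (l'.get ⟨j0 + (k + 1), by omega⟩).2.2 :=
          lt_of_le_of_lt (ih hk) hchain
        exact ((H3' k (by omega)) _ hgt hlt).2 (hmemG (j0 + (k + 1)) (k + 1) (by omega) hi rfl)
    -- downward: s (j0+i) ≤ t i
    have hdown : ∀ d i (hi : i < J.length), J.length - 1 - i = d →
        (l'.get ⟨j0 + i, by omega⟩).2.2 ≤ (J.get ⟨i, hi⟩).2.2 := by
      intro d
      induction d with
      | zero =>
        intro i hi hd
        have hieq : i = J.length - 1 := by omega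
        subst hieq
        by_contra hlt
        push_neg at hlt
        exact (H2' _ hlt).1 (hmemG _ _ (by omega) hi rfl)
      | succ k ih =>
        intro i hi hd
        have hi1 : i + 1 < J.length := by omega
        have hchain : (l'.get ⟨j0 + i, by omega⟩).2.2
            < (l'.get ⟨j0 + (i + 1), by omega⟩).2.2 :=
          time_mono hl' (show j0 + i < j0 + (i + 1) by omega) (by omega)
        have hle : (l'.get ⟨j0 + i, by omega⟩).2.2 < (J.get ⟨i + 1, hi1⟩).2.2 :=
          lt_of_lt_of_le hchain (ih (i + 1) hi1 (by omega))
        by_contra hlt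
        push_neg at hlt
        exact ((H3' i (by omega)) _ hlt hle).1 (hmemG _ _ (by omega) hi rfl)
    have htimeG : ∀ j i (hj : j < l'.length) (hi : i < J.length), j = j0 + i →
        (l'.get ⟨j, hj⟩).2.2 = (J.get ⟨i, hi⟩).2.2 := by
      rintro j i hj hi rfl
      exact le_antisymm (hdown _ i hi rfl) (hup i hi)
    -- j0 = 0
    have hj0z : j0 = 0 := by
      by_contra hj0z
      have hj0pos : 0 < j0 := Nat.pos_of_ne_zero hj0z
      have hlt : (l'.get ⟨j0 - 1, by omega⟩).2.2 < (J.get ⟨0, h0⟩).2.2 := by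
        have h1 : (l'.get ⟨j0 - 1, by omega⟩).2.2 < (l'.get ⟨j0, by omega⟩).2.2 :=
          time_mono hl' (show j0 - 1 < j0 by omega) (by omega)
        have h2 := htimeG j0 0 (by omega) h0 (by omega)
        omega
      have hfst1 : (l'.get ⟨j0 - 1, by omega⟩).1 = (J.get ⟨0, h0⟩).1 - 1 := by
        rw [fst_get hl' hcw' (show j0 - 1 < l'.length by omega)]
        rw [eq_sub_iff_add_eq, hj0]
        have hc1 : ((j0 - 1 : ℕ) : Fin n) + 1 = ((j0 : ℕ) : Fin n) := by
          conv_rhs => rw [show j0 = j0 - 1 + 1 by omega]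
          push_cast
          ring
        rw [add_assoc, hc1]
      have hmm := mem_of_journey hl' (show j0 - 1 < l'.length by omega)
      apply (H1' _ hlt).2
      have hedge : s((J.get ⟨0, h0⟩).1 - 1, (J.get ⟨0, h0⟩).1)
          = s((l'.get ⟨j0 - 1, show j0 - 1 < l'.length by omega⟩).1,
              (l'.get ⟨j0 - 1, show j0 - 1 < l'.length by omega⟩).2.1) := by
        rw [hfst1, cw_get hcw' (show j0 - 1 < l'.length by omega), hfst1, sub_add_cancel]
      rw [hedge]
      exact hmm
    subst hj0z
    -- l'.length = J.length
    have hlen : l'.length = J.length := by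
      by_contra hll
      have hgt : J.length < l'.length := by omega
      have hstep : (J.get ⟨J.length - 1, by omega⟩).2.2 < (l'.get ⟨J.length, hgt⟩).2.2 := by
        have h1 := htimeG (J.length - 1) (J.length - 1) (by omega) (by omega) (by omega)
        have h2 := time_mono hl' (show J.length - 1 < J.length by omega) hgt
        omega
      have hfstL : (l'.get ⟨J.length, hgt⟩).1 = (J.get ⟨J.length - 1, by omega⟩).1 + 1 := by
        rw [fst_get hl' hcw' hgt, fst_get hJ hCW (show J.length - 1 < J.length by omega), hj0]
        have hc1 : ((J.length - 1 : ℕ) : Fin n) + 1 = ((J.length : ℕ) : Fin n) := by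
          conv_rhs => rw [show J.length = J.length - 1 + 1 by omega]
          push_cast
          ring
        rw [add_assoc, add_assoc, hc1]
        norm_num
      have hmm := mem_of_journey hl' hgt
      rw [cw_get hcw' hgt, hfstL] at hmm
      have h2 : (J.get ⟨J.length - 1, by omega⟩).1 + 1 + 1
          = (J.get ⟨J.length - 1, by omega⟩).1 + 2 := by ring
      rw [h2] at hmm
      exact (H2' _ hstep).2 hmm
    -- conclude l' = J
    apply hne
    apply List.ext_get hlen
    intro i hi hi2
    have e1 : (l'.get ⟨i, hi⟩).1 = (J.get ⟨i, hi2⟩).1 := hfstG i i hi hi2 (by omega)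
    have e2 : (l'.get ⟨i, hi⟩).2.1 = (J.get ⟨i, hi2⟩).2.1 := by
      rw [cw_get hcw' hi, cw_get hCW hi2, e1]
    have e3 : (l'.get ⟨i, hi⟩).2.2 = (J.get ⟨i, hi2⟩).2.2 := htimeG i i hi hi2 (by omega)
    exact Prod.ext e1 (Prod.ext e2 e3)

end Main

/-- Characterisation of dominating clockwise journeys on a cycle without any journey
covering all vertices. -/
theorem stmt15 {n : ℕ} [NeZero n] (hn : 3 ≤ n) (L : TLabel n)
    (hcyc : ∀ e, L e ≠ ∅ ↔ ∃ i : Fin n, e = s(i, i + 1))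
    (hP : Proper L) (hTC : TC L)
    (hnc : ¬ ∃ l : Steps n, IsJourneySteps L l ∧ Covers l Set.univ)
    (J : Steps n) (hJ : IsJourneySteps L J) (hCW : Clockwise J) :
    DominatingCW L J ↔
      ((∀ p, J.head? = some p → ∀ t < p.2.2,
          t ∉ L s(p.1, p.1 + 1) ∧ t ∉ L s(p.1 - 1, p.1)) ∧
       (∀ p, J.getLast? = some p → ∀ t, p.2.2 < t →
          t ∉ L s(p.1, p.1 + 1) ∧ t ∉ L s(p.1 + 1, p.1 + 2)) ∧
       J.Chain' (fun p q => ∀ t, p.2.2 < t → t < q.2.2 →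
          t ∉ L s(p.1, p.1 + 1) ∧ t ∉ L s(q.1, q.1 + 1))) := by
  exact stmt15_aux hnc J hJ hCW

end Temporal
end

section
/- In a proper temporal graph on a cycle with no journey covering all vertices, if a clockwise journey and a counter-clockwise journey both start at a common vertex v, are both prefix-foremost, are both suffixes of dominating journeys, and do not cross except at v, then every label used by either journey is necessary: removing it destroys reachability from v to the journey's endpoint. -/
open Finset

namespace Temporal

variable {n : ℕ}

/-- The journey starts at `v`. -/
def startsAt (l : Steps n) (v : Fin n) : Prop := ∃ p, l.head? = some p ∧ p.1 = v

/-- The journey arrives at vertex `w` at time `t`. -/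
def arrives (l : Steps n) (w : Fin n) (t : ℕ) : Prop :=
  ∃ p, l.getLast? = some p ∧ p.2.1 = w ∧ p.2.2 = t

/-- A journey starting at `v` is prefix-foremost (among journeys in direction `Dir`
starting at `v`): each of its nonempty prefixes arrives at its endpoint at the earliest
possible time. -/
def PrefixForemost [NeZero n] (L : TLabel n) (Dir : Steps n → Prop) (v : Fin n) (J : Steps n) : Prop :=
  ∀ l, l <+: J → l ≠ [] → ∀ w t, arrives l w t →
    ∀ l' t', IsJourneySteps L l' → Dir l' → startsAt l' v → arrives l' w t' → t ≤ t'

section FinRing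
open Fin.CommRing

section Aux

variable {n : ℕ}

/-- Moving `k` steps clockwise (`b = true`) or counter-clockwise (`b = false`). -/
def pt [NeZero n] (b : Bool) (v : Fin n) (k : ℕ) : Fin n := bif b then v + k else v - k

/-- Directed journey predicate. -/
def DirB [NeZero n] (b : Bool) (l : Steps n) : Prop := ∀ p ∈ l, p.2.1 = pt b p.1 1

variable [NeZero n]

lemma pt_zero (b : Bool) (v : Fin n) : pt b v 0 = v := by cases b <;> simp [pt]

lemma pt_shift (b : Bool) (v : Fin n) (j k : ℕ) : pt b (pt b v j) k = pt b v (j + k) := by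
  cases b <;> simp [pt] <;> push_cast <;> ring

lemma pt_succ (b : Bool) (v : Fin n) (k : ℕ) : pt b v (k+1) = pt b (pt b v k) 1 := by
  rw [pt_shift]

lemma pt_pred (b : Bool) (v : Fin n) (k : ℕ) (hk : 1 ≤ k) :
    pt (!b) (pt b v k) 1 = pt b v (k-1) := by
  obtain ⟨k, rfl⟩ := Nat.exists_eq_add_of_le hk
  cases b <;> simp [pt] <;> push_cast <;> ring

lemma natCast_inj_of_lt {k k' : ℕ} (hk : k < n) (hk' : k' < n) (h : (k : Fin n) = k') :
    k = k' := by
  have := congrArg Fin.val h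
  simpa [Fin.val_natCast, Nat.mod_eq_of_lt hk, Nat.mod_eq_of_lt hk'] using this

lemma pt_inj (b : Bool) (v : Fin n) {k k' : ℕ} (hk : k < n) (hk' : k' < n)
    (h : pt b v k = pt b v k') : k = k' := by
  cases b <;> simp [pt] at h <;> exact natCast_inj_of_lt hk hk' h

lemma pt_opp (b : Bool) (v : Fin n) (k : ℕ) (hk : k ≤ n) :
    pt (!b) v k = pt b v (n - k) := by
  have hc : ((n - k : ℕ) : Fin n) = -(k : ℕ) := by
    rw [Nat.cast_sub hk]; simp
  cases b <;> simp [pt, hc] <;> ring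

lemma pt_surj (b : Bool) (v x : Fin n) : ∃ k < n, pt b v k = x := by
  cases b
  · exact ⟨(v - x).val, (v - x).isLt, by simp [pt, Fin.cast_val_eq_self]⟩
  · exact ⟨(x - v).val, (x - v).isLt, by simp [pt, Fin.cast_val_eq_self]⟩

lemma pt_ne_self (b : Bool) (v : Fin n) {k : ℕ} (h0 : 0 < k) (hn : k < n) :
    pt b v k ≠ v := by
  intro h
  have hk0 : k = 0 := pt_inj b v hn (Nat.pos_of_ne_zero (NeZero.ne n)) (by rw [h, pt_zero])
  omega

end Aux

section Arc

variable {n : ℕ} [NeZero n]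

/-- The canonical directed journey of length `d` from `v` with times `f`. -/
def arc (b : Bool) (v : Fin n) (d : ℕ) (f : ℕ → ℕ) : Steps n :=
  (List.range d).map (fun k => (pt b v k, pt b v (k+1), f k))

@[simp] lemma arc_length (b : Bool) (v : Fin n) (d : ℕ) (f : ℕ → ℕ) :
    (arc b v d f).length = d := by simp [arc]

lemma arc_ne_nil (b : Bool) (v : Fin n) {d : ℕ} (hd : 0 < d) (f : ℕ → ℕ) :
    arc b v d f ≠ [] := by
  simp [arc, List.range_eq_nil]; omega

lemma arc_head? (b : Bool) (v : Fin n) {d : ℕ} (hd : 0 < d) (f : ℕ → ℕ) :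
    (arc b v d f).head? = some (v, pt b v 1, f 0) := by
  obtain ⟨d, rfl⟩ := Nat.exists_eq_succ_of_ne_zero hd.ne'
  rw [arc, List.range_succ_eq_map]
  simp [pt_zero]

lemma arc_getLast? (b : Bool) (v : Fin n) {d : ℕ} (hd : 0 < d) (f : ℕ → ℕ) :
    (arc b v d f).getLast? = some (pt b v (d-1), pt b v d, f (d-1)) := by
  obtain ⟨d, rfl⟩ := Nat.exists_eq_succ_of_ne_zero hd.ne'
  rw [arc, List.range_succ]
  simp

lemma arc_startsAt (b : Bool) (v : Fin n) {d : ℕ} (hd : 0 < d) (f : ℕ → ℕ) :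
    startsAt (arc b v d f) v := ⟨_, arc_head? b v hd f, rfl⟩

lemma arc_arrives (b : Bool) (v : Fin n) {d : ℕ} (hd : 0 < d) (f : ℕ → ℕ) :
    arrives (arc b v d f) (pt b v d) (f (d-1)) := ⟨_, arc_getLast? b v hd f, rfl, rfl⟩

lemma arc_dir (b : Bool) (v : Fin n) (d : ℕ) (f : ℕ → ℕ) : DirB b (arc b v d f) := by
  intro p hp
  simp [arc] at hp
  obtain ⟨k, _, rfl⟩ := hp
  exact pt_succ b v k

lemma arc_journey {M : TLabel n} (b : Bool) (v : Fin n) {d : ℕ} (hd : 0 < d) {f : ℕ → ℕ}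
    (hmem : ∀ k < d, f k ∈ M s(pt b v k, pt b v (k+1)))
    (hmono : ∀ j k, j < k → k < d → f j < f k) :
    IsJourneySteps M (arc b v d f) := by
  refine ⟨arc_ne_nil b v hd f, ?_, ?_⟩
  · intro p hp
    simp [arc] at hp
    obtain ⟨k, hk, rfl⟩ := hp
    exact hmem k hk
  · unfold List.Chain'; rw [arc, List.isChain_map]
    obtain ⟨d, rfl⟩ := Nat.exists_eq_succ_of_ne_zero hd.ne'
    rw [List.isChain_range_succ]
    intro m hm
    exact ⟨rfl, hmono m (m+1) (Nat.lt_succ_self m) (by omega)⟩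

lemma arc_verts (b : Bool) (v : Fin n) {d : ℕ} (hd : 0 < d) (f : ℕ → ℕ) :
    verts (arc b v d f) = {x | ∃ k ≤ d, x = pt b v k} := by
  ext x
  simp only [verts, arc, Set.mem_setOf_eq, List.mem_map, List.mem_range]
  constructor
  · rintro ⟨p, ⟨k, hk, rfl⟩, h | h⟩
    · exact ⟨k, by omega, h⟩
    · exact ⟨k+1, by omega, h⟩
  · rintro ⟨k, hk, rfl⟩
    rcases Nat.lt_or_ge k d with h | h
    · exact ⟨_, ⟨k, h, rfl⟩, Or.inl rfl⟩
    · have : k = d := le_antisymm hk h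
      subst this
      exact ⟨_, ⟨k-1, by omega, rfl⟩, Or.inr (by rw [Nat.sub_add_cancel hd])⟩

lemma arc_covers_univ (b : Bool) (v : Fin n) {d : ℕ} (hd : n ≤ d) (f : ℕ → ℕ) :
    Covers (arc b v d f) Set.univ := by
  intro x _
  rw [arc_verts b v (lt_of_lt_of_le (Nat.pos_of_ne_zero (NeZero.ne n)) hd) f]
  obtain ⟨k, hk, hpt⟩ := pt_surj b v x
  exact ⟨k, by omega, hpt.symm⟩

end Arc

section Struct

variable {n : ℕ} [NeZero n]

lemma arc_cons (b : Bool) (v : Fin n) (t : ℕ) (m : ℕ) (f : ℕ → ℕ) :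
    arc b v (m+1) (fun k => match k with | 0 => t | k+1 => f k)
      = (v, pt b v 1, t) :: arc b (pt b v 1) m f := by
  rw [arc, List.range_succ_eq_map, List.map_cons, List.map_map]
  congr 1
  · simp [pt_zero]
  · rw [arc]
    apply List.map_congr_left
    intro k _
    simp only [Function.comp_apply]
    rw [pt_shift, pt_shift]
    have h2 : 1 + (k + 1) = k.succ + 1 := by omega
    have h1 : 1 + k = k.succ := by omega
    rw [h1, h2]

/-- Any directed journey starting at `v` is an arc. -/
lemma journey_eq_arc {M : TLabel n} (b : Bool) : ∀ (l : Steps n) (v : Fin n),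
    IsJourneySteps M l → DirB b l → startsAt l v →
    ∃ f, l = arc b v l.length f ∧
      (∀ k < l.length, f k ∈ M s(pt b v k, pt b v (k+1))) ∧
      (∀ j k, j < k → k < l.length → f j < f k) := by
  intro l
  induction l with
  | nil => intro v hj _ _; exact absurd rfl hj.1
  | cons p rest ih =>
    intro v hj hd hv
    obtain ⟨p', hp', hpv⟩ := hv
    rw [List.head?_cons, Option.some_inj] at hp'
    subst hp'
    have hstep : p.2.1 = pt b v 1 := hpv ▸ hd p List.mem_cons_self
    have hp2 : p = (v, pt b v 1, p.2.2) := by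
      rw [← hstep, ← hpv]
    cases rest with
    | nil =>
      refine ⟨fun _ => p.2.2, ?_, ?_, ?_⟩
      · show _ = arc b v 1 _
        rw [arc]
        have : List.range 1 = [0] := by simp [List.range_succ]
        rw [this, List.map_singleton, pt_zero, ← hstep, ← hpv]
      · intro k hk
        have : k = 0 := by simpa using hk
        subst this
        show p.2.2 ∈ M s(pt b v 0, pt b v 1)
        rw [pt_zero, ← hstep, ← hpv]
        exact hj.2.1 p List.mem_cons_self
      · intro j k hj' hk
        simp at hk; omega
    | cons r rest' =>
      have hch := List.isChain_cons_cons.mp hj.2.2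
      have hjr : IsJourneySteps M (r :: rest') :=
        ⟨List.cons_ne_nil r rest', fun q hq => hj.2.1 q (List.mem_cons_of_mem p hq), hch.2⟩
      have hdr : DirB b (r :: rest') := fun q hq => hd q (List.mem_cons_of_mem p hq)
      have hvr : startsAt (r :: rest') (pt b v 1) := ⟨r, rfl, by rw [← hch.1.1, hstep]⟩
      obtain ⟨f0, hequ, hmem0, hmono0⟩ := ih (pt b v 1) hjr hdr hvr
      set m := (r :: rest').length with hm
      have hm0 : 0 < m := by simp [hm]
      have hr22 : r.2.2 = f0 0 := by
        have h1 : (r :: rest').head? = some r := rfl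
        rw [hequ, arc_head? b (pt b v 1) hm0 f0, Option.some_inj] at h1
        simp [← h1]
      refine ⟨fun k => match k with | 0 => p.2.2 | k+1 => f0 k, ?_, ?_, ?_⟩
      · show _ = arc b v (m + 1) _
        rw [arc_cons, ← hequ, hp2]
      · intro k hk
        match k with
        | 0 =>
          show p.2.2 ∈ M s(pt b v 0, pt b v 1)
          rw [pt_zero, ← hstep, ← hpv]
          exact hj.2.1 p List.mem_cons_self
        | k+1 =>
          show f0 k ∈ M s(pt b v (k+1), pt b v (k+1+1))
          have := hmem0 k (by simpa [hm] using hk)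
          rwa [pt_shift, pt_shift, Nat.add_comm 1 k, Nat.add_comm 1 (k+1)] at this
      · intro j k hjk hk
        match j, k with
        | 0, k+1 =>
          show p.2.2 < f0 k
          have h1 : p.2.2 < f0 0 := hr22 ▸ hch.1.2
          rcases Nat.eq_zero_or_pos k with rfl | hk0
          · exact h1
          · exact h1.trans (hmono0 0 k hk0 (by simpa [hm] using hk))
        | j+1, k+1 =>
          show f0 j < f0 k
          exact hmono0 j k (by omega) (by simpa [hm] using hk)

lemma adj_decode {M : TLabel n} (hM : ∀ e, M e ≠ ∅ → ∃ i : Fin n, e = s(i, i+1))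
    {x y : Fin n} {t : ℕ} (ht : t ∈ M s(x, y)) : ∃ b, y = pt b x 1 := by
  obtain ⟨i, hi⟩ := hM _ (Finset.ne_empty_of_mem ht)
  rw [Sym2.eq_iff] at hi
  rcases hi with ⟨rfl, rfl⟩ | ⟨rfl, rfl⟩
  · exact ⟨true, by simp [pt]⟩
  · exact ⟨false, by simp [pt]⟩

end Struct

section Extract

variable {n : ℕ} [NeZero n]

/-- Any journey on the cycle can be straightened into a directed arc journey that is at
least as fast. -/
lemma extract_arc {M : TLabel n} (hM : ∀ e, M e ≠ ∅ → ∃ i : Fin n, e = s(i, i+1))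
    {v w : Fin n} {T : ℕ} (h : JTo M v w T) :
    w = v ∨ ∃ (b : Bool) (d : ℕ) (f : ℕ → ℕ), 0 < d ∧
      (∀ k < d, f k ∈ M s(pt b v k, pt b v (k+1))) ∧
      (∀ j k, j < k → k < d → f j < f k) ∧
      pt b v d = w ∧ f (d-1) ≤ T := by
  induction h with
  | single w t ht =>
    obtain ⟨b, rfl⟩ := adj_decode hM ht
    right
    refine ⟨b, 1, fun _ => t, Nat.one_pos, ?_, by omega, rfl, le_refl t⟩
    intro k hk
    have : k = 0 := by omega
    subst this
    rwa [pt_zero]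
  | step u w t t' h1 ht hlt ih =>
    rcases ih with rfl | ⟨b, d, f, hd, hmem, hmono, hpt, harr⟩
    · -- u = v : single fresh step
      obtain ⟨b, rfl⟩ := adj_decode hM ht
      right
      refine ⟨b, 1, fun _ => t', Nat.one_pos, ?_, by omega, rfl, le_refl t'⟩
      intro k hk
      have : k = 0 := by omega
      subst this
      rwa [pt_zero]
    · obtain ⟨b2, hw⟩ := adj_decode hM ht
      by_cases hbb : b2 = b
      · -- continue in the same direction
        subst hbb
        right
        refine ⟨b2, d+1, fun k => if k < d then f k else t', by omega, ?_, ?_, ?_, ?_⟩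
        · intro k hk
          rcases Nat.lt_or_ge k d with h | h
          · simpa [h] using hmem k h
          · have hkd : k = d := by omega
            have he : pt b2 v (k+1) = w := by rw [hkd, pt_succ, hpt, ← hw]
            show (if k < d then f k else t') ∈ M s(pt b2 v k, pt b2 v (k+1))
            rw [if_neg (by omega), he, hkd, hpt]
            exact ht
        · intro j k hjk hk
          rcases Nat.lt_or_ge k d with h | h
          · simpa [h, hjk.trans h] using hmono j k hjk h
          · have hkd : k = d := by omega
            have hjd : j < d := by omega
            have hfj : f j ≤ f (d-1) := by
              rcases Nat.lt_or_ge j (d-1) with h' | h'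
              · exact (hmono j (d-1) h' (by omega)).le
              · have : j = d - 1 := by omega
                rw [this]
            show (if j < d then f j else t') < (if k < d then f k else t')
            rw [if_pos hjd, if_neg (by omega)]
            omega
        · rw [pt_succ, hpt, ← hw]
        · show (if d < d then f d else t') ≤ t'
          rw [if_neg (lt_irrefl d)]
      · -- reversal: w is the previous vertex
        have hb2 : b2 = !b := by
          cases b <;> cases b2 <;> simp_all
        subst hb2
        have hw' : w = pt b v (d-1) := by rw [hw, ← hpt, pt_pred b v d hd]
        rcases Nat.lt_or_ge (d-1) 1 with hd1 | hd1
        · left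
          have : d - 1 = 0 := by omega
          rw [hw', this, pt_zero]
        · right
          refine ⟨b, d-1, f, by omega, ?_, ?_, hw'.symm, ?_⟩
          · intro k hk; exact hmem k (by omega)
          · intro j k hjk hk; exact hmono j k hjk (by omega)
          · have : f (d-1-1) < f (d-1) := hmono _ _ (by omega) (by omega)
            omega

end Extract

section Misc

variable {n : ℕ} [NeZero n]

lemma verts_append (a b : Steps n) : verts (a ++ b) = verts a ∪ verts b := by
  ext x
  simp only [verts, Set.mem_setOf_eq, List.mem_append, Set.mem_union]
  constructor
  · rintro ⟨p, (hp | hp), h⟩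
    · exact Or.inl ⟨p, hp, h⟩
    · exact Or.inr ⟨p, hp, h⟩
  · rintro (⟨p, hp, h⟩ | ⟨p, hp, h⟩)
    · exact ⟨p, Or.inl hp, h⟩
    · exact ⟨p, Or.inr hp, h⟩

lemma erase_subset' (L : TLabel n) (e : Sym2 (Fin n)) (t : ℕ) (f : Sym2 (Fin n)) :
    erase L e t f ⊆ L f := by
  rw [erase]
  split
  · exact Finset.erase_subset t (L f)
  · exact subset_rfl

lemma journey_mono {M M' : TLabel n} (h : ∀ f, M f ⊆ M' f) {l : Steps n}
    (hj : IsJourneySteps M l) : IsJourneySteps M' l :=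
  ⟨hj.1, fun p hp => h _ (hj.2.1 p hp), hj.2.2⟩

/-- Gluing a prefix onto a faster-or-equal replacement suffix. -/
lemma journey_glue {M : TLabel n} {a J Y : Steps n}
    (hD : IsJourneySteps M (a ++ J)) (hY : IsJourneySteps M Y)
    (hJne : J ≠ []) (hYne : Y ≠ [])
    (hhead : ∀ pJ pY, J.head? = some pJ → Y.head? = some pY →
      pJ.1 = pY.1 ∧ pJ.2.2 ≤ pY.2.2) :
    IsJourneySteps M (a ++ Y) := by
  refine ⟨by simp [hYne], ?_, ?_⟩
  · intro p hp
    rcases List.mem_append.mp hp with h | h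
    · exact hD.2.1 p (List.mem_append.mpr (Or.inl h))
    · exact hY.2.1 p h
  · unfold List.Chain'; rw [List.isChain_append]
    refine ⟨(List.isChain_append.mp hD.2.2).1, hY.2.2, ?_⟩
    intro x hx y hy
    have hJh : J.head? = some (J.head hJne) := List.head?_eq_head hJne
    have := (List.isChain_append.mp hD.2.2).2.2 x hx (J.head hJne) hJh
    obtain ⟨h1, h2⟩ := hhead (J.head hJne) y hJh hy
    exact ⟨this.1.trans h1, lt_of_lt_of_le this.2 h2⟩

end Misc

section Key

variable {n : ℕ} [NeZero n]

lemma arc_take_one (b : Bool) (v : Fin n) {d : ℕ} (hd : 0 < d) (f : ℕ → ℕ) :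
    (arc b v d f).take 1 = arc b v 1 f := by
  rw [arc, arc, ← List.map_take, List.take_range, Nat.min_eq_left hd]

lemma key (b : Bool) (hn : 3 ≤ n) (L : TLabel n)
    (hcyc : ∀ e, L e ≠ ∅ ↔ ∃ i : Fin n, e = s(i, i + 1))
    (hnc : ¬ ∃ l : Steps n, IsJourneySteps L l ∧ Covers l Set.univ)
    (v : Fin n) (J1 J2 : Steps n)
    (hJ1 : IsJourneySteps L J1) (h1d : DirB b J1) (h1v : startsAt J1 v)
    (hJ2 : IsJourneySteps L J2) (h2d : DirB (!b) J2) (h2v : startsAt J2 v)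
    (hpf1 : PrefixForemost L (DirB b) v J1)
    (hpf2 : PrefixForemost L (DirB (!b)) v J2)
    (hdom1 : ∃ D, (IsJourneySteps L D ∧ DirB b D ∧
        ∀ l', IsJourneySteps L l' → DirB b l' → l' ≠ D → ¬ Covers l' (verts D)) ∧ J1 <:+ D)
    (hdom2 : ∃ D, (IsJourneySteps L D ∧ DirB (!b) D ∧
        ∀ l', IsJourneySteps L l' → DirB (!b) l' → l' ≠ D → ¬ Covers l' (verts D)) ∧ J2 <:+ D)
    (hcross : ∀ w, w ∈ verts J1 → w ∈ verts J2 → w = v) :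
    ∀ p ∈ J1, ∀ q, J1.getLast? = some q →
      ¬ Reach (erase L s(p.1, p.2.1) p.2.2) v q.2.1 := by
  intro p hp q hq hreach
  obtain ⟨f1, hJ1arc, hmem1, hmono1⟩ := journey_eq_arc b J1 v hJ1 h1d h1v
  obtain ⟨d, hdL⟩ : ∃ d, J1.length = d := ⟨_, rfl⟩
  rw [hdL] at hJ1arc hmem1 hmono1
  have hd0 : 0 < d := hdL ▸ List.length_pos_iff.mpr hJ1.1
  have hdn : d < n := by
    by_contra h
    push_neg at h
    exact hnc ⟨J1, hJ1, by rw [hJ1arc]; exact arc_covers_univ b v h f1⟩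
  rw [hJ1arc, arc_getLast? b v hd0 f1, Option.some_inj] at hq
  have hqw : q.2.1 = pt b v d := by rw [← hq]
  have hwv : pt b v d ≠ v := pt_ne_self b v hd0 hdn
  have hpk : ∃ k < d, p = (pt b v k, pt b v (k+1), f1 k) := by
    rw [hJ1arc] at hp
    simp only [arc, List.mem_map, List.mem_range] at hp
    obtain ⟨k, hk, hkeq⟩ := hp
    exact ⟨k, hk, hkeq.symm⟩
  obtain ⟨k, hk, hpeq⟩ := hpk
  set L' := erase L s(p.1, p.2.1) p.2.2 with hL'
  have hL'sub : ∀ f, L' f ⊆ L f := erase_subset' L _ _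
  rw [hqw] at hreach
  rcases hreach with heq | ⟨T, hT⟩
  · exact hwv heq.symm
  · have hM : ∀ e, L' e ≠ ∅ → ∃ i : Fin n, e = s(i, i+1) := by
      intro e he
      refine (hcyc e).mp fun h0 => he (Finset.subset_empty.mp ?_)
      rw [← h0]
      exact hL'sub e
    rcases extract_arc hM hT with heq | ⟨b', d', f', hd', hmem', hmono', hpt', harr'⟩
    · exact hwv heq
    · have hmem'L : ∀ j < d', f' j ∈ L s(pt b' v j, pt b' v (j+1)) :=
        fun j hj => hL'sub _ (hmem' j hj)
      have hd'n : d' < n := by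
        by_contra h
        push_neg at h
        exact hnc ⟨arc b' v d' f', arc_journey b' v hd' hmem'L hmono',
          arc_covers_univ b' v h f'⟩
      by_cases hbb : b' = b
      · -- same direction: contradiction with domination of J1's extension
        subst hbb
        have hdd : d' = d := pt_inj b' v hd'n hdn hpt'
        subst hdd
        obtain ⟨D, ⟨hDj, hDdir, hDdom⟩, D0, hD0⟩ := hdom1
        have hYj : IsJourneySteps L' (arc b' v d' f') := arc_journey b' v hd' hmem' hmono'
        have hYjL : IsJourneySteps L (arc b' v d' f') := journey_mono hL'sub hYj
        have hf0 : f1 0 ≤ f' 0 := by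
          refine hpf1 (J1.take 1) (List.take_prefix 1 J1) ?_ (pt b' v 1) (f1 0) ?_
            (arc b' v 1 f') (f' 0) ?_ (arc_dir b' v 1 f') (arc_startsAt b' v Nat.one_pos f')
            (arc_arrives b' v Nat.one_pos f')
          · rw [hJ1arc, arc_take_one b' v hd0 f1]
            exact arc_ne_nil b' v Nat.one_pos f1
          · rw [hJ1arc, arc_take_one b' v hd0 f1]
            exact arc_arrives b' v Nat.one_pos f1
          · refine arc_journey b' v Nat.one_pos (fun j hj => ?_) (by omega)
            have : j = 0 := by omega
            subst this
            exact hmem'L 0 hd'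
        have hDj' : IsJourneySteps L (D0 ++ J1) := by rw [hD0]; exact hDj
        have hglue : IsJourneySteps L (D0 ++ arc b' v d' f') := by
          refine journey_glue hDj' hYjL hJ1.1 (arc_ne_nil b' v hd' f') ?_
          intro pJ pY hpJ hpY
          rw [hJ1arc, arc_head? b' v hd0 f1, Option.some_inj] at hpJ
          rw [arc_head? b' v hd' f', Option.some_inj] at hpY
          rw [← hpJ, ← hpY]
          exact ⟨rfl, hf0⟩
        have hgdir : DirB b' (D0 ++ arc b' v d' f') := by
          intro r hr
          rcases List.mem_append.mp hr with h | h
          · exact hDdir r (by rw [← hD0]; exact List.mem_append_left J1 h)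
          · exact arc_dir b' v d' f' r h
        have hgne : D0 ++ arc b' v d' f' ≠ D := by
          intro h
          rw [← hD0] at h
          have hYJ : arc b' v d' f' = J1 := List.append_cancel_left h
          have hpY : p ∈ arc b' v d' f' := hYJ.symm ▸ hp
          have hmem := hYj.2.1 p hpY
          rw [hL', erase] at hmem
          simp only [if_pos rfl] at hmem
          exact Finset.notMem_erase _ _ hmem
        have hgcov : Covers (D0 ++ arc b' v d' f') (verts D) := by
          rw [← hD0]
          show verts (D0 ++ J1) ⊆ verts (D0 ++ arc b' v d' f')
          rw [verts_append, verts_append, hJ1arc, arc_verts b' v hd0 f1,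
            arc_verts b' v hd' f']
        exact hDdom _ hglue hgdir hgne hgcov
      · -- opposite direction
        have hb' : b' = !b := by cases b <;> cases b' <;> simp_all
        subst hb'
        have hnd : pt (!b) v (n - d) = pt b v d := by
          rw [pt_opp b v (n - d) (by omega), Nat.sub_sub_self hdn.le]
        have hd'nd : d' = n - d := pt_inj (!b) v hd'n (by omega) (hpt'.trans hnd.symm)
        obtain ⟨f2, hJ2arc, hmem2, hmono2⟩ := journey_eq_arc (!b) J2 v hJ2 h2d h2v
        obtain ⟨d2, hd2L⟩ : ∃ d2, J2.length = d2 := ⟨_, rfl⟩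
        rw [hd2L] at hJ2arc hmem2 hmono2
        have hd20 : 0 < d2 := hd2L ▸ List.length_pos_iff.mpr hJ2.1
        have hwJ1 : pt b v d ∈ verts J1 := by
          rw [hJ1arc, arc_verts b v hd0 f1]
          exact ⟨d, le_refl d, rfl⟩
        have hd2lt : d2 < d' := by
          by_contra h
          push_neg at h
          have hwJ2 : pt b v d ∈ verts J2 := by
            rw [hJ2arc, arc_verts (!b) v hd20 f2]
            exact ⟨d', h, hpt'.symm⟩
          exact hwv (hcross _ hwJ1 hwJ2)
        obtain ⟨D, ⟨hDj, hDdir, hDdom⟩, D0, hD0⟩ := hdom2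
        have hYj : IsJourneySteps L' (arc (!b) v d' f') := arc_journey (!b) v hd' hmem' hmono'
        have hYjL : IsJourneySteps L (arc (!b) v d' f') := journey_mono hL'sub hYj
        have hf0 : f2 0 ≤ f' 0 := by
          refine hpf2 (J2.take 1) (List.take_prefix 1 J2) ?_ (pt (!b) v 1) (f2 0) ?_
            (arc (!b) v 1 f') (f' 0) ?_ (arc_dir (!b) v 1 f') (arc_startsAt (!b) v Nat.one_pos f')
            (arc_arrives (!b) v Nat.one_pos f')
          · rw [hJ2arc, arc_take_one (!b) v hd20 f2]
            exact arc_ne_nil (!b) v Nat.one_pos f2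
          · rw [hJ2arc, arc_take_one (!b) v hd20 f2]
            exact arc_arrives (!b) v Nat.one_pos f2
          · refine arc_journey (!b) v Nat.one_pos (fun j hj => ?_) (by omega)
            have : j = 0 := by omega
            subst this
            exact hmem'L 0 hd'
        have hDj' : IsJourneySteps L (D0 ++ J2) := by rw [hD0]; exact hDj
        have hglue : IsJourneySteps L (D0 ++ arc (!b) v d' f') := by
          refine journey_glue hDj' hYjL hJ2.1 (arc_ne_nil (!b) v hd' f') ?_
          intro pJ pY hpJ hpY
          rw [hJ2arc, arc_head? (!b) v hd20 f2, Option.some_inj] at hpJ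
          rw [arc_head? (!b) v hd' f', Option.some_inj] at hpY
          rw [← hpJ, ← hpY]
          exact ⟨rfl, hf0⟩
        have hgdir : DirB (!b) (D0 ++ arc (!b) v d' f') := by
          intro r hr
          rcases List.mem_append.mp hr with h | h
          · exact hDdir r (by rw [← hD0]; exact List.mem_append_left J2 h)
          · exact arc_dir (!b) v d' f' r h
        have hgne : D0 ++ arc (!b) v d' f' ≠ D := by
          intro h
          rw [← hD0] at h
          have hYJ : arc (!b) v d' f' = J2 := List.append_cancel_left h
          have := congrArg List.length hYJ
          rw [arc_length, hd2L] at this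
          omega
        have hgcov : Covers (D0 ++ arc (!b) v d' f') (verts D) := by
          rw [← hD0]
          show verts (D0 ++ J2) ⊆ verts (D0 ++ arc (!b) v d' f')
          rw [verts_append, verts_append, hJ2arc, arc_verts (!b) v hd20 f2,
            arc_verts (!b) v hd' f']
          apply Set.union_subset_union_right
          rintro x ⟨j, hj, rfl⟩
          exact ⟨j, by omega, rfl⟩
        exact hDdom _ hglue hgdir hgne hgcov

end Key

section Convert

variable {n : ℕ} [NeZero n]

lemma dirB_true {l : Steps n} : DirB true l ↔ Clockwise l := by
  unfold DirB Clockwise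
  constructor <;> intro h p hp <;> have := h p hp <;> simpa [pt] using this

lemma dirB_false {l : Steps n} : DirB false l ↔ CounterClockwise l := by
  unfold DirB CounterClockwise
  constructor <;> intro h p hp <;> have := h p hp <;> simpa [pt] using this

end Convert

end FinRing

/-- On a cycle with no journey covering all vertices, a non-crossing pair of prefix-foremost
clockwise/counter-clockwise journeys from `v` which are suffixes of dominating journeys is
necessary: removing any of their labels destroys reachability from `v` to the corresponding
endpoint. -/
theorem stmt16 {n : ℕ} [NeZero n] (hn : 3 ≤ n) (L : TLabel n)
    (hcyc : ∀ e, L e ≠ ∅ ↔ ∃ i : Fin n, e = s(i, i + 1))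
    (hP : Proper L)
    (hnc : ¬ ∃ l : Steps n, IsJourneySteps L l ∧ Covers l Set.univ)
    (v : Fin n) (Jc Jcc : Steps n)
    (hJc : IsJourneySteps L Jc) (hJcCW : Clockwise Jc) (hJcv : startsAt Jc v)
    (hJcc : IsJourneySteps L Jcc) (hJccCCW : CounterClockwise Jcc) (hJccv : startsAt Jcc v)
    (hpfc : PrefixForemost L Clockwise v Jc)
    (hpfcc : PrefixForemost L CounterClockwise v Jcc)
    (hdomc : ∃ D, DominatingCW L D ∧ Jc <:+ D)
    (hdomcc : ∃ D, DominatingCCW L D ∧ Jcc <:+ D)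
    (hcross : ∀ w, w ∈ verts Jc → w ∈ verts Jcc → w = v) :
    (∀ p ∈ Jc, ∀ q, Jc.getLast? = some q →
        ¬ Reach (erase L s(p.1, p.2.1) p.2.2) v q.2.1) ∧
    (∀ p ∈ Jcc, ∀ q, Jcc.getLast? = some q →
        ¬ Reach (erase L s(p.1, p.2.1) p.2.2) v q.2.1) := by
  have hpfc' : PrefixForemost L (DirB true) v Jc := by
    intro l hl hne w t ha l' t' hj hdir hst harr
    exact hpfc l hl hne w t ha l' t' hj (dirB_true.mp hdir) hst harr
  have hpfcc' : PrefixForemost L (DirB false) v Jcc := by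
    intro l hl hne w t ha l' t' hj hdir hst harr
    exact hpfcc l hl hne w t ha l' t' hj (dirB_false.mp hdir) hst harr
  have hdomc' : ∃ D, (IsJourneySteps L D ∧ DirB true D ∧
      ∀ l', IsJourneySteps L l' → DirB true l' → l' ≠ D → ¬ Covers l' (verts D)) ∧ Jc <:+ D := by
    obtain ⟨D, ⟨h1, h2, h3⟩, hsuf⟩ := hdomc
    exact ⟨D, ⟨h1, dirB_true.mpr h2, fun l' ha hb => h3 l' ha (dirB_true.mp hb)⟩, hsuf⟩
  have hdomcc' : ∃ D, (IsJourneySteps L D ∧ DirB false D ∧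
      ∀ l', IsJourneySteps L l' → DirB false l' → l' ≠ D → ¬ Covers l' (verts D)) ∧ Jcc <:+ D := by
    obtain ⟨D, ⟨h1, h2, h3⟩, hsuf⟩ := hdomcc
    exact ⟨D, ⟨h1, dirB_false.mpr h2, fun l' ha hb => h3 l' ha (dirB_false.mp hb)⟩, hsuf⟩
  constructor
  · exact key true hn L hcyc hnc v Jc Jcc hJc (dirB_true.mpr hJcCW) hJcv
      hJcc (dirB_false.mpr hJccCCW) hJccv hpfc' hpfcc' hdomc' hdomcc' hcross
  · exact key false hn L hcyc hnc v Jcc Jc hJcc (dirB_false.mpr hJccCCW) hJccv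
      hJc (dirB_true.mpr hJcCW) hJcv hpfcc' hpfc' hdomcc' hdomc'
      (fun w h1 h2 => hcross w h2 h1)

end Temporal
end
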